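/- arXiv:1607.04083 — 7 statements merged into one kernel-verified Lean document; each statement's English description precedes it below -/
import Mathlib

section
/- Let ℓ₁, ℓ₂, ℓ₃ be three distinct lines in ℂ³ which are neither all concurrent nor all coplanar, and suppose ℓ₁ and ℓ₂ meet at a point p, spanning a plane h. Then every line ℓ intersecting all three either passes through p, or lies in h and passes through the unique point q = ℓ₃ ∩ h. -/
/-- The affine line in `ℂ³` through the point `p` with direction `d`. -/
def lineThru (p d : ℂ × ℂ × ℂ) : Set (ℂ × ℂ × ℂ) :=
  {x | ∃ t : ℂ, x = p + t • d}

/-- The affine plane `{x : a ⬝ x = c}` in `ℂ³` (with normal vector `a ≠ 0`). -/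
def planeOf (a : ℂ × ℂ × ℂ) (c : ℂ) : Set (ℂ × ℂ × ℂ) :=
  {x | a.1 * x.1 + a.2.1 * x.2.1 + a.2.2 * x.2.2 = c}

/-!
A line `ℓ` meets `ℓ₁` and `ℓ₂` at parameters `t₁, t₂`. If these coincide, the common point lies
on both `ℓ₁` and `ℓ₂`, hence is `p₀`. Otherwise `t ↦ a ⬝ (q + t • e)` is an affine function taking the
value `c` at two different parameters, hence constant, so `ℓ ⊆ h`; then the point
where `ℓ` meets `ℓ₃` lies on `ℓ₃ ∩ h = {q₀}`.
-/

lemma lineThru_eq_of_mem {p d y : ℂ × ℂ × ℂ} (hy : y ∈ lineThru p d) :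
    lineThru p d = lineThru y d := by
  obtain ⟨s, rfl⟩ := hy
  ext x
  constructor
  · rintro ⟨t, rfl⟩
    exact ⟨t - s, by rw [sub_smul]; abel⟩
  · rintro ⟨t, rfl⟩
    exact ⟨s + t, by rw [add_smul]; abel⟩

lemma lineThru_smul {p d : ℂ × ℂ × ℂ} {k : ℂ} (hk : k ≠ 0) :
    lineThru p (k • d) = lineThru p d := by
  ext x
  constructor
  · rintro ⟨t, rfl⟩
    exact ⟨t * k, by rw [smul_smul]⟩
  · rintro ⟨t, rfl⟩
    exact ⟨t / k, by rw [smul_smul, div_mul_cancel₀ _ hk]⟩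

lemma lineThru_eq_of_mem_of_ne {p d d' x : ℂ × ℂ × ℂ} (hx : x ∈ lineThru p d)
    (hx' : x ∈ lineThru p d') (hxp : x ≠ p) : lineThru p d = lineThru p d' := by
  obtain ⟨u, rfl⟩ := hx
  obtain ⟨u', hu'⟩ := hx'
  have hu : u ≠ 0 := by rintro rfl; simp at hxp
  have hu'0 : u' ≠ 0 := by rintro rfl; simp [hu'] at hxp
  have hd : d' = (u'⁻¹ * u) • d := by
    rw [mul_smul, add_left_cancel hu', inv_smul_smul₀ hu'0]
  rw [hd, lineThru_smul (mul_ne_zero (inv_ne_zero hu'0) hu)]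

lemma eq_of_mem_lineThru_inter {p d p' d' p₀ x : ℂ × ℂ × ℂ}
    (hne : lineThru p d ≠ lineThru p' d')
    (hp₀ : p₀ ∈ lineThru p d) (hp₀' : p₀ ∈ lineThru p' d')
    (hx : x ∈ lineThru p d) (hx' : x ∈ lineThru p' d') : x = p₀ := by
  rw [lineThru_eq_of_mem hp₀] at hx hne
  rw [lineThru_eq_of_mem hp₀'] at hx' hne
  by_contra hxp
  exact hne (lineThru_eq_of_mem_of_ne hx hx' hxp)

lemma mem_planeOf_add_smul_iff {a q e : ℂ × ℂ × ℂ} {c t : ℂ} :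
    q + t • e ∈ planeOf a c ↔
      (a.1 * q.1 + a.2.1 * q.2.1 + a.2.2 * q.2.2)
        + t * (a.1 * e.1 + a.2.1 * e.2.1 + a.2.2 * e.2.2) = c := by
  simp only [planeOf, Set.mem_ofPred_eq, Prod.fst_add, Prod.snd_add, Prod.smul_fst,
    Prod.smul_snd, smul_eq_mul]
  ring_nf

lemma lineThru_subset_planeOf {a q e : ℂ × ℂ × ℂ} {c t₁ t₂ : ℂ} (ht : t₁ ≠ t₂)
    (h₁ : q + t₁ • e ∈ planeOf a c) (h₂ : q + t₂ • e ∈ planeOf a c) :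
    lineThru q e ⊆ planeOf a c := by
  rintro x ⟨t, rfl⟩
  rw [mem_planeOf_add_smul_iff] at h₁ h₂ ⊢
  have key : (t₁ - t₂) * ((a.1 * q.1 + a.2.1 * q.2.1 + a.2.2 * q.2.2)
      + t * (a.1 * e.1 + a.2.1 * e.2.1 + a.2.2 * e.2.2) - c) = 0 := by
    linear_combination (t - t₂) * h₁ - (t - t₁) * h₂
  exact sub_eq_zero.mp ((mul_eq_zero.mp key).resolve_left (sub_ne_zero.mpr ht))

theorem stmt5_general (p d : Fin 3 → ℂ × ℂ × ℂ)
    (hdist : ∀ i j, i ≠ j → lineThru (p i) (d i) ≠ lineThru (p j) (d j))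
    (p₀ : ℂ × ℂ × ℂ)
    (hp₁ : p₀ ∈ lineThru (p 0) (d 0)) (hp₂ : p₀ ∈ lineThru (p 1) (d 1))
    (a : ℂ × ℂ × ℂ) (c : ℂ)
    (h₁ : lineThru (p 0) (d 0) ⊆ planeOf a c)
    (h₂ : lineThru (p 1) (d 1) ⊆ planeOf a c)
    (q₀ : ℂ × ℂ × ℂ)
    (hq₀ : lineThru (p 2) (d 2) ∩ planeOf a c = {q₀})
    (q e : ℂ × ℂ × ℂ)
    (hmeet : ∀ i, ∃ x, x ∈ lineThru q e ∩ lineThru (p i) (d i)) :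
    p₀ ∈ lineThru q e ∨ (lineThru q e ⊆ planeOf a c ∧ q₀ ∈ lineThru q e) := by
  obtain ⟨_, ⟨t₁, rfl⟩, hx₁⟩ := hmeet 0
  obtain ⟨_, ⟨t₂, rfl⟩, hx₂⟩ := hmeet 1
  obtain ⟨x₃, hx₃ℓ, hx₃⟩ := hmeet 2
  by_cases ht : t₁ = t₂
  · subst ht
    left
    rw [← eq_of_mem_lineThru_inter (hdist 0 1 (by decide)) hp₁ hp₂ hx₁ hx₂]
    exact ⟨t₁, rfl⟩
  · have hsub : lineThru q e ⊆ planeOf a c := lineThru_subset_planeOf ht (h₁ hx₁) (h₂ hx₂)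
    have hq₀x₃ : x₃ ∈ lineThru (p 2) (d 2) ∩ planeOf a c := ⟨hx₃, hsub hx₃ℓ⟩
    rw [hq₀, Set.mem_singleton_iff] at hq₀x₃
    exact Or.inr ⟨hsub, hq₀x₃ ▸ hx₃ℓ⟩

/-- Let `ℓ₁, ℓ₂, ℓ₃` be three distinct lines in `ℂ³`, neither all concurrent
nor all coplanar, with `ℓ₁, ℓ₂` meeting at a point `p₀` and spanning a plane
`h` (so `ℓ₃ ⊄ h`, `p₀ ∉ ℓ₃`, and `ℓ₃` meets `h` exactly at a point `q₀`).
Then every line `ℓ` intersecting all three lines either passes through `p₀`,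
or lies in `h` and passes through `q₀`. -/
theorem stmt5 (p d : Fin 3 → ℂ × ℂ × ℂ) (hd : ∀ i, d i ≠ 0)
    (hdist : ∀ i j, i ≠ j → lineThru (p i) (d i) ≠ lineThru (p j) (d j))
    (p₀ : ℂ × ℂ × ℂ)
    (hp₁ : p₀ ∈ lineThru (p 0) (d 0)) (hp₂ : p₀ ∈ lineThru (p 1) (d 1))
    (a : ℂ × ℂ × ℂ) (c : ℂ) (ha : a ≠ 0)
    (h₁ : lineThru (p 0) (d 0) ⊆ planeOf a c)
    (h₂ : lineThru (p 1) (d 1) ⊆ planeOf a c)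
    (hp₃ : p₀ ∉ lineThru (p 2) (d 2))
    (q₀ : ℂ × ℂ × ℂ)
    (hq₀ : lineThru (p 2) (d 2) ∩ planeOf a c = {q₀})
    (q e : ℂ × ℂ × ℂ) (he : e ≠ 0)
    (hmeet : ∀ i, ∃ x, x ∈ lineThru q e ∩ lineThru (p i) (d i)) :
    p₀ ∈ lineThru q e ∨ (lineThru q e ⊆ planeOf a c ∧ q₀ ∈ lineThru q e) :=
  stmt5_general p d hdist p₀ hp₁ hp₂ a c h₁ h₂ q₀ hq₀ q e hmeet
end

section
/- If G is a Laman graph on n ≥ 3 vertices, and G is obtained from a graph G' by a 0-extension (adding a new vertex adjacent to exactly two existing vertices), then G' is a Laman graph. -/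
/-!
The graph `G'` is the subgraph of `G` induced on the old vertices. Induced subgraphs inherit the
sparsity count `|E'| ≤ 2|V'| - 3`, and deleting the new vertex, of degree two, removes one vertex
and two edges, which preserves the tight count `|E| = 2|V| - 3`.
-/

/-- A graph `G` on a finite vertex set `V` is a Laman graph if `|E| = 2|V| − 3`
and every subgraph induced on a set `V'` of at least two vertices spans at most
`2|V'| − 3` edges. -/
def IsLaman {V : Type*} [Fintype V] (G : SimpleGraph V) : Prop :=
  G.edgeSet.ncard = 2 * Fintype.card V - 3 ∧
  ∀ V' : Set V, 2 ≤ V'.ncard →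
    {e ∈ G.edgeSet | ∀ v ∈ e, v ∈ V'}.ncard ≤ 2 * V'.ncard - 3

namespace SimpleGraph

variable {V W : Type*}

theorem image_sym2Map_spanned_comap (f : V ↪ W) (G : SimpleGraph W) (S : Set V) :
    f.sym2Map '' {e ∈ (G.comap f).edgeSet | ∀ v ∈ e, v ∈ S} =
      {e ∈ G.edgeSet | ∀ w ∈ e, w ∈ f '' S} := by
  ext e
  constructor
  · rintro ⟨e, ⟨he, hS⟩, rfl⟩
    refine ⟨by induction e using Sym2.ind; exact he, fun w hw ↦ ?_⟩
    obtain ⟨v, hv, rfl⟩ := Sym2.mem_map.mp hw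
    exact Set.mem_image_of_mem f (hS v hv)
  · induction e using Sym2.ind with
    | _ a b =>
      rintro ⟨hab, hS⟩
      obtain ⟨x, hx, rfl⟩ := hS a (Sym2.mem_mk_left a b)
      obtain ⟨y, hy, rfl⟩ := hS b (Sym2.mem_mk_right _ b)
      refine ⟨s(x, y), ⟨hab, ?_⟩, rfl⟩
      simp only [Sym2.mem_iff]
      rintro v (rfl | rfl) <;> assumption

theorem ncard_spanned_comap (f : V ↪ W) (G : SimpleGraph W) (S : Set V) :
    {e ∈ (G.comap f).edgeSet | ∀ v ∈ e, v ∈ S}.ncard =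
      {e ∈ G.edgeSet | ∀ w ∈ e, w ∈ f '' S}.ncard := by
  rw [← image_sym2Map_spanned_comap, Set.ncard_image_of_injective _ f.sym2Map.injective]

theorem spanned_compl_singleton_eq_sdiff_incidenceSet (G : SimpleGraph V) (v : V) :
    {e ∈ G.edgeSet | ∀ w ∈ e, w ∈ ({v}ᶜ : Set V)} = G.edgeSet \ G.incidenceSet v := by
  ext e
  simp only [incidenceSet, Set.mem_sdiff, Set.mem_ofPred_eq, Set.mem_compl_singleton_iff]
  grind

theorem ncard_incidenceSet (G : SimpleGraph V) (v : V) :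
    (G.incidenceSet v).ncard = (G.neighborSet v).ncard := by
  classical
  simp_rw [← Nat.card_coe_set_eq]
  exact Nat.card_congr (G.incidenceSetEquivNeighborSet v)

theorem ncard_edgeSet_comap_some_add [Finite V] (G : SimpleGraph (Option V)) :
    (G.comap some).edgeSet.ncard + (G.neighborSet none).ncard = G.edgeSet.ncard := by
  have h := ncard_spanned_comap Function.Embedding.some G Set.univ
  simp only [Set.mem_univ, implies_true, and_true, Set.ofPred_mem_eq, Set.image_univ,
    Function.Embedding.some_apply, (Set.isCompl_range_some_none V).eq_compl,
    spanned_compl_singleton_eq_sdiff_incidenceSet] at h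
  rw [← ncard_incidenceSet, h, Set.ncard_sdiff_add_ncard_of_subset (G.incidenceSet_subset none)]

end SimpleGraph

theorem IsLaman.sparse_comap {V W : Type*} [Fintype W] {G : SimpleGraph W} (hG : IsLaman G)
    (f : V ↪ W) (S : Set V) (hS : 2 ≤ S.ncard) :
    {e ∈ (G.comap f).edgeSet | ∀ v ∈ e, v ∈ S}.ncard ≤ 2 * S.ncard - 3 := by
  have hfS : (f '' S).ncard = S.ncard := Set.ncard_image_of_injective S f.injective
  rw [SimpleGraph.ncard_spanned_comap, ← hfS]
  exact hG.2 _ (hfS ▸ hS)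

theorem stmt9_general {V : Type*} [Fintype V] (G : SimpleGraph (Option V))
    (G' : SimpleGraph V) (u₁ u₂ : V) (hu : u₁ ≠ u₂)
    (hnew : ∀ x : V, G.Adj none (some x) ↔ (x = u₁ ∨ x = u₂))
    (hold : ∀ x y : V, G.Adj (some x) (some y) ↔ G'.Adj x y)
    (hG : IsLaman G) : IsLaman G' := by
  obtain rfl : G' = G.comap some := by
    ext x y
    exact (hold x y).symm
  have hdeg : (G.neighborSet none).ncard = 2 := by
    have hnbr : G.neighborSet none = {some u₁, some u₂} := by
      ext (_ | x) <;> simp [hnew]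
    rw [hnbr, Set.ncard_pair (by simpa using hu)]
  have hcard : 2 ≤ Fintype.card V := Fintype.one_lt_card_iff.mpr ⟨u₁, u₂, hu⟩
  refine ⟨?_, hG.sparse_comap Function.Embedding.some⟩
  have hedges := G.ncard_edgeSet_comap_some_add
  rw [hG.1, hdeg, Fintype.card_option] at hedges
  omega

/-- If `G` (on `n ≥ 3` vertices) is a Laman graph obtained from `G'` by a
`0`-extension (adding a new vertex, here `none : Option V`, adjacent to exactly
the two distinct existing vertices `u₁, u₂`), then `G'` is a Laman graph. -/
theorem stmt9 {V : Type*} [Fintype V] (G : SimpleGraph (Option V))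
    (G' : SimpleGraph V) (u₁ u₂ : V) (hu : u₁ ≠ u₂)
    (hnew : ∀ x : V, G.Adj none (some x) ↔ (x = u₁ ∨ x = u₂))
    (hold : ∀ x y : V, G.Adj (some x) (some y) ↔ G'.Adj x y)
    (hn : 3 ≤ Fintype.card (Option V))
    (hG : IsLaman G) : IsLaman G' :=
  stmt9_general G G' u₁ u₂ hu hnew hold hG
end

section
/- If G' is a Laman graph and G is obtained from G' by a 1-extension (subdividing an edge uv by a new vertex z and adding an edge zw for some vertex w ∉ {u,v}), then G is a Laman graph. -/
open Set Function

namespace SimpleGraph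

variable {V W : Type*}

lemma sep_edgeSet_eq_inter_sym2 (G : SimpleGraph V) (S : Set V) :
    {e ∈ G.edgeSet | ∀ v ∈ e, v ∈ S} = G.edgeSet ∩ S.sym2 := by
  ext e
  induction e using Sym2.ind
  simp

lemma edgeSet_inter_sym2_eq_empty [Finite V] (G : SimpleGraph V) {S : Set V}
    (hS : S.ncard ≤ 1) : G.edgeSet ∩ S.sym2 = ∅ := by
  refine eq_empty_of_forall_notMem fun e ⟨he, heS⟩ => ?_
  induction e using Sym2.ind with
  | _ x y =>
    rw [mem_edgeSet] at he
    rw [mk_mem_sym2_iff] at heS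
    have := (one_lt_ncard_iff (toFinite S)).2 ⟨x, y, heS.1, heS.2, he.ne⟩
    omega

lemma edgeSet_comap (f : V → W) (G : SimpleGraph W) :
    (G.comap f).edgeSet = Sym2.map f ⁻¹' G.edgeSet := by
  ext e
  induction e using Sym2.ind
  simp

lemma edgeSet_inter_sym2_image (f : V → W) (G : SimpleGraph W) (T : Set V) :
    G.edgeSet ∩ (f '' T).sym2 = Sym2.map f '' ((G.comap f).edgeSet ∩ T.sym2) := by
  rw [sym2_image, edgeSet_comap, inter_comm _ T.sym2, image_inter_preimage, inter_comm]

lemma ncard_edgeSet_inter_sym2_image {f : V → W} (hf : Injective f) (G : SimpleGraph W)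
    (T : Set V) : (G.edgeSet ∩ (f '' T).sym2).ncard = ((G.comap f).edgeSet ∩ T.sym2).ncard := by
  rw [edgeSet_inter_sym2_image, ncard_image_of_injective _ (Sym2.map.injective hf)]

lemma edgeSet_inter_sym2_insert (G : SimpleGraph V) (a : V) (S : Set V) :
    G.edgeSet ∩ (insert a S).sym2 = G.edgeSet ∩ S.sym2 ∪ (s(a, ·)) '' (G.neighborSet a ∩ S) := by
  ext e
  induction e using Sym2.ind with
  | _ x y =>
    simp only [mem_union, mem_inter_iff, mem_edgeSet, mk_mem_sym2_iff, mem_insert_iff,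
      mem_image, mem_neighborSet]
    constructor
    · rintro ⟨h, rfl | hx, rfl | hy⟩
      · exact absurd h G.irrefl
      · exact Or.inr ⟨y, ⟨h, hy⟩, rfl⟩
      · exact Or.inr ⟨x, ⟨h.symm, hx⟩, Sym2.eq_swap⟩
      · exact Or.inl ⟨h, hx, hy⟩
    · rintro (⟨h, hx, hy⟩ | ⟨b, ⟨h, hb⟩, he⟩)
      · exact ⟨h, Or.inr hx, Or.inr hy⟩
      · rcases Sym2.eq_iff.1 he with ⟨rfl, rfl⟩ | ⟨rfl, rfl⟩
        · exact ⟨h, Or.inl rfl, Or.inr hb⟩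
        · exact ⟨h.symm, Or.inr hb, Or.inl rfl⟩

lemma ncard_edgeSet_inter_sym2_insert [Finite V] (G : SimpleGraph V) {a : V} {S : Set V}
    (ha : a ∉ S) :
    (G.edgeSet ∩ (insert a S).sym2).ncard
      = (G.edgeSet ∩ S.sym2).ncard + (G.neighborSet a ∩ S).ncard := by
  have hdisj : Disjoint (G.edgeSet ∩ S.sym2) ((s(a, ·)) '' (G.neighborSet a ∩ S)) := by
    rw [Set.disjoint_left]
    rintro _ ⟨-, haS⟩ ⟨b, -, rfl⟩
    exact ha (mk_mem_sym2_iff.1 haS).1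
  rw [edgeSet_inter_sym2_insert, ncard_union_eq hdisj,
    ncard_image_of_injective _ (show Injective (s(a, ·)) from (Sym2.mkEmbedding a).injective)]

end SimpleGraph

open SimpleGraph

-- For `|S| ≤ 1` no edge is spanned and `2 * |S| - 3` truncates to `0`.
lemma isLaman_iff {V : Type*} [Fintype V] {G : SimpleGraph V} :
    IsLaman G ↔ G.edgeSet.ncard = 2 * Fintype.card V - 3 ∧
      ∀ S : Set V, (G.edgeSet ∩ S.sym2).ncard ≤ 2 * S.ncard - 3 := by
  simp only [IsLaman, sep_edgeSet_eq_inter_sym2]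
  refine and_congr_right fun _ => ⟨fun h S => ?_, fun h S _ => h S⟩
  by_cases hS : 2 ≤ S.ncard
  · exact h S hS
  · rw [G.edgeSet_inter_sym2_eq_empty (by omega), ncard_empty]
    exact Nat.zero_le _

lemma Option.image_some_preimage_some {α : Type*} {S : Set (Option α)} (h : none ∉ S) :
    some '' (some ⁻¹' S) = S := by
  ext (_ | x) <;> simp [h]

lemma Option.insert_none_image_some_preimage_some {α : Type*} {S : Set (Option α)}
    (h : none ∈ S) : insert none (some '' (some ⁻¹' S)) = S := by
  ext (_ | x) <;> simp [h]

section OneExtension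

variable {V : Type*} {G' : SimpleGraph V} {G : SimpleGraph (Option V)} {u v w : V}

lemma comap_some_eq_deleteEdges
    (hold : ∀ x y : V, G.Adj (some x) (some y) ↔
      (G'.Adj x y ∧ ¬(x = u ∧ y = v) ∧ ¬(x = v ∧ y = u))) :
    G.comap some = G'.deleteEdges {s(u, v)} := by
  ext x y
  simp only [comap_adj, hold, deleteEdges_adj, mem_singleton_iff, Sym2.eq_iff]
  tauto

lemma ncard_edgeSet_inter_sym2_image_some
    (hold : ∀ x y : V, G.Adj (some x) (some y) ↔
      (G'.Adj x y ∧ ¬(x = u ∧ y = v) ∧ ¬(x = v ∧ y = u))) (T : Set V) :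
    (G.edgeSet ∩ (some '' T).sym2).ncard = ((G'.edgeSet ∩ T.sym2) \ {s(u, v)}).ncard := by
  rw [ncard_edgeSet_inter_sym2_image (Option.some_injective V), comap_some_eq_deleteEdges hold,
    edgeSet_deleteEdges, inter_sdiff_right_comm]

lemma ncard_edgeSet_inter_sym2_insert_none [Finite V]
    (hnew : ∀ x : V, G.Adj none (some x) ↔ (x = u ∨ x = v ∨ x = w))
    (hold : ∀ x y : V, G.Adj (some x) (some y) ↔
      (G'.Adj x y ∧ ¬(x = u ∧ y = v) ∧ ¬(x = v ∧ y = u))) (T : Set V) :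
    (G.edgeSet ∩ (insert none (some '' T)).sym2).ncard
      = ((G'.edgeSet ∩ T.sym2) \ {s(u, v)}).ncard + (T ∩ {u, v, w}).ncard := by
  have hnbr : some ⁻¹' G.neighborSet none = {u, v, w} := by
    ext x
    simp [hnew]
  rw [G.ncard_edgeSet_inter_sym2_insert (by simp), ncard_edgeSet_inter_sym2_image_some hold,
    inter_comm (G.neighborSet none), ← image_inter_preimage, hnbr,
    ncard_image_of_injective _ (Option.some_injective V)]

lemma ncard_edgeSet_of_oneExtension [Finite V] (huv : G'.Adj u v) (hwu : w ≠ u) (hwv : w ≠ v)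
    (hnew : ∀ x : V, G.Adj none (some x) ↔ (x = u ∨ x = v ∨ x = w))
    (hold : ∀ x y : V, G.Adj (some x) (some y) ↔
      (G'.Adj x y ∧ ¬(x = u ∧ y = v) ∧ ¬(x = v ∧ y = u))) :
    G.edgeSet.ncard = G'.edgeSet.ncard + 2 := by
  have hcount := ncard_edgeSet_inter_sym2_insert_none hnew hold univ
  simp only [image_univ, insert_none_range_some, sym2_univ, inter_univ, univ_inter] at hcount
  rw [ncard_eq_three.2 ⟨u, v, w, huv.ne, hwu.symm, hwv.symm, rfl⟩] at hcount
  have hremove := ncard_sdiff_singleton_add_one (show s(u, v) ∈ G'.edgeSet from huv)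
  omega

end OneExtension

lemma IsLaman.ncard_sdiff_add_ncard_inter_le {V : Type*} [Fintype V] {G' : SimpleGraph V}
    {u v w : V} (hG' : IsLaman G') (huv : G'.Adj u v) (hwu : w ≠ u) (hwv : w ≠ v) (T : Set V) :
    ((G'.edgeSet ∩ T.sym2) \ {s(u, v)}).ncard + (T ∩ {u, v, w}).ncard ≤ 2 * (T.ncard + 1) - 3 := by
  have hspan := (isLaman_iff.1 hG').2 T
  have hthree : ({u, v, w} : Set V).ncard = 3 :=
    ncard_eq_three.2 ⟨u, v, w, huv.ne, hwu.symm, hwv.symm, rfl⟩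
  by_cases huvT : u ∈ T ∧ v ∈ T
  · have hmem : s(u, v) ∈ G'.edgeSet ∩ T.sym2 := ⟨huv, huvT⟩
    have hT : 1 < T.ncard := (one_lt_ncard_iff (toFinite T)).2 ⟨u, v, huvT.1, huvT.2, huv.ne⟩
    have hinter : (T ∩ {u, v, w}).ncard ≤ 3 := hthree ▸ ncard_le_ncard inter_subset_right
    have := ncard_sdiff_singleton_add_one hmem
    omega
  · have hsdiff : ((G'.edgeSet ∩ T.sym2) \ {s(u, v)}).ncard ≤ (G'.edgeSet ∩ T.sym2).ncard :=
      ncard_le_ncard sdiff_subset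
    have hssub : T ∩ {u, v, w} ⊂ {u, v, w} := by
      refine ssubset_iff_of_subset inter_subset_right |>.2 ?_
      rw [not_and_or] at huvT
      rcases huvT with hu | hv
      · exact ⟨u, by simp, fun h => hu h.1⟩
      · exact ⟨v, by simp, fun h => hv h.1⟩
    have hinter : (T ∩ {u, v, w}).ncard < 3 := hthree ▸ ncard_lt_ncard hssub
    have hinterT : (T ∩ {u, v, w}).ncard ≤ T.ncard := ncard_le_ncard inter_subset_left
    omega

/-- If `G'` is a Laman graph and `G` is obtained from `G'` by a `1`-extension
(subdividing the edge `uv` by a new vertex `z`, here `none : Option V`, and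
adding the edge `zw` for some vertex `w ∉ {u,v}`), then `G` is a Laman graph. -/
theorem stmt10 {V : Type*} [Fintype V] (G' : SimpleGraph V)
    (G : SimpleGraph (Option V)) (u v w : V)
    (huv : G'.Adj u v) (hwu : w ≠ u) (hwv : w ≠ v)
    (hnew : ∀ x : V, G.Adj none (some x) ↔ (x = u ∨ x = v ∨ x = w))
    (hold : ∀ x y : V, G.Adj (some x) (some y) ↔
      (G'.Adj x y ∧ ¬(x = u ∧ y = v) ∧ ¬(x = v ∧ y = u)))
    (hG' : IsLaman G') : IsLaman G := by
  refine isLaman_iff.2 ⟨?_, fun S => ?_⟩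
  · have hedges := ncard_edgeSet_of_oneExtension huv hwu hwv hnew hold
    have hcard := hG'.1
    have hpos : 0 < G'.edgeSet.ncard := (ncard_pos (toFinite _)).2 ⟨s(u, v), huv⟩
    rw [Fintype.card_option]
    omega
  · by_cases hS : none ∈ S
    · rw [← Option.insert_none_image_some_preimage_some hS,
        ncard_edgeSet_inter_sym2_insert_none hnew hold,
        ncard_insert_of_notMem (by simp), ncard_image_of_injective _ (Option.some_injective V)]
      exact hG'.ncard_sdiff_add_ncard_inter_le huv hwu hwv _
    · rw [← Option.image_some_preimage_some hS, ncard_edgeSet_inter_sym2_image_some hold,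
        ncard_image_of_injective _ (Option.some_injective V)]
      exact (ncard_le_ncard sdiff_subset).trans ((isLaman_iff.1 hG').2 _)
end

section
/- If G' is a Laman graph and G is obtained from G' by a 0-extension, then G is a Laman graph. -/
/-!
The new vertex has degree two. A vertex set `V'` of the extended graph either avoids the new
vertex, and then spans only old edges, or it contains it and `k` old vertices: then it spans at
most `2k - 3` old edges and two new ones, or, when `k = 1`, no old edge and at most one new one.
In all cases this is at most `2(k + 1) - 3`.
-/

def edgesWithin {V : Type*} (E : Set (Sym2 V)) (s : Set V) : Set (Sym2 V) :=
  {e ∈ E | ∀ v ∈ e, v ∈ s}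

section edgesWithin

variable {V W : Type*}

lemma edgesWithin_union (E F : Set (Sym2 V)) (s : Set V) :
    edgesWithin (E ∪ F) s = edgesWithin E s ∪ edgesWithin F s :=
  Set.sep_union

lemma edgesWithin_image_map (f : V → W) (E : Set (Sym2 V))
    (s : Set W) : edgesWithin (Sym2.map f '' E) s = Sym2.map f '' edgesWithin E (f ⁻¹' s) := by
  ext e
  simp only [edgesWithin, Set.mem_sep_iff, Set.mem_image, Set.mem_preimage]
  constructor
  · rintro ⟨⟨e', he', rfl⟩, hs⟩
    exact ⟨e', ⟨he', fun v hv => hs _ (Sym2.mem_map.2 ⟨v, hv, rfl⟩)⟩, rfl⟩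
  · rintro ⟨e', ⟨he', hs⟩, rfl⟩
    refine ⟨⟨e', he', rfl⟩, fun w hw => ?_⟩
    obtain ⟨v, hv, rfl⟩ := Sym2.mem_map.1 hw
    exact hs v hv

lemma edgesWithin_image_mk_subset (a : W) (f : V → W) (T : Set V) (s : Set W) :
    edgesWithin ((fun u => s(a, f u)) '' T) s ⊆ (fun u => s(a, f u)) '' (T ∩ f ⁻¹' s) := by
  rintro _ ⟨⟨u, hu, rfl⟩, hs⟩
  exact ⟨u, ⟨hu, hs _ (Sym2.mem_mk_right _ _)⟩, rfl⟩

lemma edgesWithin_image_mk_eq_empty {a : W} {s : Set W} (ha : a ∉ s) (f : V → W) (T : Set V) :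
    edgesWithin ((fun u => s(a, f u)) '' T) s = ∅ := by
  refine Set.eq_empty_of_forall_notMem ?_
  rintro _ ⟨⟨u, -, rfl⟩, hs⟩
  exact ha (hs a (Sym2.mem_mk_left _ _))

lemma SimpleGraph.edgesWithin_edgeSet_eq_empty (G : SimpleGraph V) {s : Set V}
    (hs : s.Subsingleton) : edgesWithin G.edgeSet s = ∅ := by
  refine Set.eq_empty_of_forall_notMem ?_
  rintro e ⟨he, hes⟩
  induction e using Sym2.ind with
  | _ x y =>
    obtain rfl := hs (hes x (Sym2.mem_mk_left _ _)) (hes y (Sym2.mem_mk_right _ _))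
    exact G.irrefl he

end edgesWithin

lemma Sym2.notMem_image_map_some_of_none_mem {V : Type*} {E : Set (Sym2 V)}
    {e : Sym2 (Option V)} (he : none ∈ e) : e ∉ Sym2.map some '' E := by
  rintro ⟨f, -, rfl⟩
  simp [Sym2.mem_map] at he

section Option

variable {V : Type*} {s : Set (Option V)}

lemma Set.ncard_eq_ncard_preimage_some_add_one [Finite V] (h : none ∈ s) :
    s.ncard = (some ⁻¹' s).ncard + 1 := by
  have hs : s = insert none (some '' (some ⁻¹' s)) := by
    ext (_ | x) <;> simp [h]
  rw [hs, Set.ncard_insert_of_notMem (by simp),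
    Set.ncard_image_of_injective _ (Option.some_injective V), ← hs]

lemma Set.ncard_eq_ncard_preimage_some (h : none ∉ s) : s.ncard = (some ⁻¹' s).ncard := by
  have hs : s = some '' (some ⁻¹' s) := by
    ext (_ | x) <;> simp [h]
  rw [hs, Set.ncard_image_of_injective _ (Option.some_injective V), ← hs]

end Option

lemma IsLaman.ncard_edgesWithin_le {V : Type*} [Fintype V] {G : SimpleGraph V} (hG : IsLaman G)
    {s : Set V} (hs : 2 ≤ s.ncard) : (edgesWithin G.edgeSet s).ncard ≤ 2 * s.ncard - 3 :=
  hG.2 s hs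

section ZeroExtension

variable {V : Type*} {G' : SimpleGraph V} {G : SimpleGraph (Option V)} {u₁ u₂ : V}

lemma edgeSet_eq_of_zeroExtension
    (hnew : ∀ x : V, G.Adj none (some x) ↔ (x = u₁ ∨ x = u₂))
    (hold : ∀ x y : V, G.Adj (some x) (some y) ↔ G'.Adj x y) :
    G.edgeSet = Sym2.map some '' G'.edgeSet ∪ (fun u => s(none, some u)) '' {u₁, u₂} := by
  ext e
  induction e using Sym2.ind with
  | _ a b =>
    rcases a with _ | x <;> rcases b with _ | y
    · simp [Sym2.notMem_image_map_some_of_none_mem (E := G'.edgeSet) (Sym2.mem_mk_left _ _)]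
    · simp [Sym2.notMem_image_map_some_of_none_mem (E := G'.edgeSet) (Sym2.mem_mk_left _ _),
        hnew, eq_comm]
    · simp [Sym2.notMem_image_map_some_of_none_mem (E := G'.edgeSet) (Sym2.mem_mk_right _ _),
        G.adj_comm _ none, hnew, eq_comm]
    · have hsome : s(some x, some y) = Sym2.map some s(x, y) := rfl
      rw [hsome, Set.mem_union, (Sym2.map.injective (Option.some_injective V)).mem_set_image]
      simp [hold]

lemma ncard_edgeSet_of_zeroExtension [Finite V] (hu : u₁ ≠ u₂)
    (hnew : ∀ x : V, G.Adj none (some x) ↔ (x = u₁ ∨ x = u₂))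
    (hold : ∀ x y : V, G.Adj (some x) (some y) ↔ G'.Adj x y) :
    G.edgeSet.ncard = G'.edgeSet.ncard + 2 := by
  have hdisj : Disjoint (Sym2.map some '' G'.edgeSet)
      ((fun u => s(none, some u)) '' ({u₁, u₂} : Set V)) := by
    rw [Set.disjoint_right]
    rintro _ ⟨u, -, rfl⟩
    exact Sym2.notMem_image_map_some_of_none_mem (Sym2.mem_mk_left _ _)
  rw [edgeSet_eq_of_zeroExtension hnew hold, Set.ncard_union_eq hdisj,
    Set.ncard_image_of_injective _ (Sym2.map.injective (Option.some_injective V)),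
    Set.ncard_image_of_injective _ fun _ _ h => Option.some_injective V (Sym2.congr_right.1 h),
    Set.ncard_pair hu]

lemma ncard_edgesWithin_le_of_zeroExtension [Fintype V] (hG' : IsLaman G')
    (hnew : ∀ x : V, G.Adj none (some x) ↔ (x = u₁ ∨ x = u₂))
    (hold : ∀ x y : V, G.Adj (some x) (some y) ↔ G'.Adj x y)
    {V' : Set (Option V)} (hV' : 2 ≤ V'.ncard) :
    (edgesWithin G.edgeSet V').ncard ≤ 2 * V'.ncard - 3 := by
  set S := some ⁻¹' V'
  have hsplit : (edgesWithin G.edgeSet V').ncard ≤ (edgesWithin G'.edgeSet S).ncard +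
      (edgesWithin ((fun u => s(none, some u)) '' {u₁, u₂}) V').ncard := by
    rw [edgeSet_eq_of_zeroExtension hnew hold, edgesWithin_union,
      edgesWithin_image_map some]
    exact (Set.ncard_union_le _ _).trans (Nat.add_le_add_right Set.ncard_image_le _)
  by_cases hnone : none ∈ V'
  · have hcard : V'.ncard = S.ncard + 1 := Set.ncard_eq_ncard_preimage_some_add_one hnone
    have hstar : (edgesWithin ((fun u => s(none, some u)) '' {u₁, u₂}) V').ncard ≤
        ({u₁, u₂} ∩ S).ncard :=
      (Set.ncard_le_ncard (edgesWithin_image_mk_subset _ _ _ _)).trans Set.ncard_image_le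
    by_cases hS : 2 ≤ S.ncard
    · have hpair : ({u₁, u₂} ∩ S).ncard ≤ ({u₂} : Set V).ncard + 1 :=
        (Set.ncard_inter_le_ncard_left _ _).trans (Set.ncard_insert_le _ _)
      have hold_le := hG'.ncard_edgesWithin_le hS
      rw [Set.ncard_singleton] at hpair
      omega
    · have hold_empty := G'.edgesWithin_edgeSet_eq_empty
        (Set.ncard_le_one_iff_subsingleton.1 (by omega : S.ncard ≤ 1))
      have hsub : ({u₁, u₂} ∩ S).ncard ≤ S.ncard := Set.ncard_inter_le_ncard_right _ _
      rw [hold_empty, Set.ncard_empty] at hsplit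
      omega
  · have hcard : V'.ncard = S.ncard := Set.ncard_eq_ncard_preimage_some hnone
    rw [edgesWithin_image_mk_eq_empty hnone, Set.ncard_empty] at hsplit
    rw [hcard] at hV' ⊢
    exact hsplit.trans (hG'.ncard_edgesWithin_le hV')

end ZeroExtension

/-- If `G'` is a Laman graph and `G` is obtained from `G'` by a `0`-extension
(adding a new vertex, here `none : Option V`, joined to exactly the two
distinct existing vertices `u₁, u₂`), then `G` is a Laman graph. -/
theorem stmt11 {V : Type*} [Fintype V] (G' : SimpleGraph V)
    (G : SimpleGraph (Option V)) (u₁ u₂ : V) (hu : u₁ ≠ u₂)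
    (hnew : ∀ x : V, G.Adj none (some x) ↔ (x = u₁ ∨ x = u₂))
    (hold : ∀ x y : V, G.Adj (some x) (some y) ↔ G'.Adj x y)
    (hG' : IsLaman G') : IsLaman G := by
  have hcard : 2 ≤ Fintype.card V := Fintype.one_lt_card_iff_nontrivial.2 ⟨u₁, u₂, hu⟩
  refine ⟨?_, fun V' hV' => ncard_edgesWithin_le_of_zeroExtension hG' hnew hold hV'⟩
  rw [ncard_edgeSet_of_zeroExtension hu hnew hold, hG'.1, Fintype.card_option]
  omega
end

section
/- For distinct points a, b, c, d in ℝ², the lines ℓ_{a,b} = {(½(a+b) + t·½(a−b)^⊥, t) : t ∈ ℝ} and ℓ_{c,d} in ℝ³ intersect or are parallel if and only if ‖a − c‖ = ‖b − d‖. -/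
/-- Counterclockwise rotation of `ℝ²` by `π/2`: `(x,y)^⊥ = (−y,x)`. -/
def perp (p : ℝ × ℝ) : ℝ × ℝ := (-p.2, p.1)

/-- The midpoint `u_{a,b} = ½(a+b)`. -/
noncomputable def uab (a b : ℝ × ℝ) : ℝ × ℝ := (1 / 2 : ℝ) • (a + b)

/-- The direction `v_{a,b} = ½(a−b)^⊥`. -/
noncomputable def vab (a b : ℝ × ℝ) : ℝ × ℝ := (1 / 2 : ℝ) • perp (a - b)

/-- The Elekes–Sharir line `ℓ_{a,b} = {(u_{a,b} + t v_{a,b}, t) : t ∈ ℝ} ⊂ ℝ³`. -/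
def lineES (a b : ℝ × ℝ) : Set ((ℝ × ℝ) × ℝ) :=
  {q | ∃ t : ℝ, q = (uab a b + t • vab a b, t)}

/-- The Euclidean distance between two points of `ℝ²`. -/
noncomputable def edist2 (p q : ℝ × ℝ) : ℝ :=
  Real.sqrt ((p.1 - q.1) ^ 2 + (p.2 - q.2) ^ 2)

/-!
Two points of `ℓ_{a,b}` and `ℓ_{c,d}` at the same height `t` coincide iff
`u_{a,b} − u_{c,d} = t (v_{c,d} − v_{a,b})`, so the lines meet or are parallel iff the plane
vectors `m = u_{a,b} − u_{c,d}` and `w = v_{c,d} − v_{a,b}` are linearly dependent, i.e. iff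
`m × w = 0`. Since `w` is a quarter turn of `½((b − d) − (a − c))` and
`m = ½((a − c) + (b − d))`, this cross product is `¼ (‖b − d‖² − ‖a − c‖²)`.
-/

def cross {K : Type*} [CommRing K] (m w : K × K) : K := m.1 * w.2 - m.2 * w.1

theorem exists_eq_smul_or_eq_zero_iff_cross_eq_zero {K : Type*} [Field K] (m w : K × K) :
    (∃ t : K, m = t • w) ∨ w = 0 ↔ cross m w = 0 := by
  constructor
  · rintro (⟨t, rfl⟩ | rfl) <;> simp only [cross, Prod.smul_fst, Prod.smul_snd, smul_eq_mul,
      Prod.fst_zero, Prod.snd_zero] <;> ring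
  · intro h
    unfold cross at h
    by_cases hw : w = 0
    · exact Or.inr hw
    left
    obtain hw₁ | hw₂ : w.1 ≠ 0 ∨ w.2 ≠ 0 := by
      by_contra! hw'
      exact hw (Prod.ext hw'.1 hw'.2)
    · refine ⟨m.1 / w.1, Prod.ext ?_ ?_⟩ <;>
        simp only [Prod.smul_fst, Prod.smul_snd, smul_eq_mul]
      · field_simp
      · field_simp
        linear_combination -h
    · refine ⟨m.2 / w.2, Prod.ext ?_ ?_⟩ <;>
        simp only [Prod.smul_fst, Prod.smul_snd, smul_eq_mul]
      · field_simp
        linear_combination h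
      · field_simp

theorem exists_mem_inter_lineES_iff (a b c d : ℝ × ℝ) :
    (∃ q, q ∈ lineES a b ∩ lineES c d) ↔
      ∃ t : ℝ, uab a b - uab c d = t • (vab c d - vab a b) := by
  constructor
  · rintro ⟨q, ⟨t, rfl⟩, s, hs⟩
    obtain ⟨hq, rfl⟩ := Prod.mk.inj hs
    exact ⟨t, by rw [smul_sub, sub_eq_sub_iff_add_eq_add, hq, add_comm]⟩
  · rintro ⟨t, ht⟩
    refine ⟨_, ⟨t, rfl⟩, t, ?_⟩
    rw [smul_sub, sub_eq_sub_iff_add_eq_add] at ht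
    rw [ht, add_comm]

theorem cross_uab_sub_vab_sub (a b c d : ℝ × ℝ) :
    cross (uab a b - uab c d) (vab c d - vab a b) =
      ((b.1 - d.1) ^ 2 + (b.2 - d.2) ^ 2 - ((a.1 - c.1) ^ 2 + (a.2 - c.2) ^ 2)) / 4 := by
  simp only [cross, uab, vab, perp, Prod.fst_sub, Prod.snd_sub, Prod.smul_fst, Prod.smul_snd,
    Prod.fst_add, Prod.snd_add, smul_eq_mul]
  ring

theorem edist2_eq_edist2_iff (p q r s : ℝ × ℝ) :
    edist2 p q = edist2 r s ↔
      (p.1 - q.1) ^ 2 + (p.2 - q.2) ^ 2 = (r.1 - s.1) ^ 2 + (r.2 - s.2) ^ 2 :=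
  Real.sqrt_inj (by positivity) (by positivity)

theorem stmt14_general (a b c d : ℝ × ℝ) :
    ((∃ q, q ∈ lineES a b ∩ lineES c d) ∨ vab a b = vab c d) ↔
      edist2 a c = edist2 b d := by
  rw [exists_mem_inter_lineES_iff, eq_comm (a := vab a b), ← sub_eq_zero,
    exists_eq_smul_or_eq_zero_iff_cross_eq_zero, cross_uab_sub_vab_sub, edist2_eq_edist2_iff]
  constructor <;> intro h <;> linarith

/-- For pairwise distinct points `a, b, c, d ∈ ℝ²`, the lines `ℓ_{a,b}` and
`ℓ_{c,d}` in `ℝ³` intersect or are parallel (equal direction vectors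
`v_{a,b} = v_{c,d}`, i.e. proportional directions `(v,1)`) iff
`‖a − c‖ = ‖b − d‖`. -/
theorem stmt14 (a b c d : ℝ × ℝ)
    (hab : a ≠ b) (hac : a ≠ c) (had : a ≠ d)
    (hbc : b ≠ c) (hbd : b ≠ d) (hcd : c ≠ d) :
    ((∃ q, q ∈ lineES a b ∩ lineES c d) ∨ vab a b = vab c d) ↔
      edist2 a c = edist2 b d :=
  stmt14_general a b c d
end

section
/- For points a, b, c ∈ ℝ² with b ≠ c, the lines ℓ_{a,b} and ℓ_{a,c} in ℝ³ neither intersect nor are parallel. -/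
/-! The points of `ℓ_{a,b}` and `ℓ_{a,c}` at height `t` differ by `½((b − c) − t (b − c)^⊥)`,
and `p + s p^⊥` vanishes only for `p = 0` since `p ⊥ p^⊥`; so the lines are disjoint.
They are not parallel because `·^⊥` is injective. -/

theorem perp_injective : Function.Injective perp := by
  rintro ⟨x, y⟩ ⟨x', y'⟩ h
  simp only [perp, Prod.mk.injEq, neg_inj] at h
  rw [h.1, h.2]

theorem eq_zero_of_add_smul_perp_eq_zero {p : ℝ × ℝ} {s : ℝ} (h : p + s • perp p = 0) :
    p = 0 := by
  obtain ⟨x, y⟩ := p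
  simp only [perp, Prod.mk_add_mk, Prod.smul_mk, smul_eq_mul, Prod.mk_eq_zero] at h ⊢
  obtain ⟨h₁, h₂⟩ := h
  have hs : 1 + s ^ 2 ≠ 0 := by positivity
  have hx : x * (1 + s ^ 2) = 0 := by linear_combination h₁ + s * h₂
  have hy : y * (1 + s ^ 2) = 0 := by linear_combination h₂ - s * h₁
  exact ⟨(mul_eq_zero.mp hx).resolve_right hs, (mul_eq_zero.mp hy).resolve_right hs⟩

theorem vab_injective (a : ℝ × ℝ) : Function.Injective (vab a) := by
  intro b c h
  simpa using perp_injective (smul_right_injective _ (by norm_num) h)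

theorem mem_lineES_iff {a b : ℝ × ℝ} {q : (ℝ × ℝ) × ℝ} :
    q ∈ lineES a b ↔ q.1 = uab a b + q.2 • vab a b := by
  constructor
  · rintro ⟨t, rfl⟩
    rfl
  · intro h
    exact ⟨q.2, Prod.ext h rfl⟩

theorem uab_add_smul_vab_sub (a b c : ℝ × ℝ) (t : ℝ) :
    uab a b + t • vab a b - (uab a c + t • vab a c)
      = (1 / 2 : ℝ) • ((b - c) + (-t) • perp (b - c)) := by
  ext <;>
    simp only [uab, vab, perp, Prod.fst_add, Prod.snd_add, Prod.fst_sub, Prod.snd_sub,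
      Prod.smul_fst, Prod.smul_snd, smul_eq_mul] <;>
    ring

theorem disjoint_lineES (a : ℝ × ℝ) {b c : ℝ × ℝ} (hbc : b ≠ c) :
    Disjoint (lineES a b) (lineES a c) := by
  refine Set.disjoint_left.mpr fun q hb hc => hbc ?_
  rw [mem_lineES_iff] at hb hc
  have h : (1 / 2 : ℝ) • ((b - c) + (-q.2) • perp (b - c)) = 0 := by
    rw [← uab_add_smul_vab_sub a, ← hb, ← hc, sub_self]
  exact sub_eq_zero.mp
    (eq_zero_of_add_smul_perp_eq_zero ((smul_eq_zero.mp h).resolve_left (by norm_num)))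

/-- For points `a, b, c ∈ ℝ²` with `b ≠ c`, the lines `ℓ_{a,b}` and
`ℓ_{a,c}` in `ℝ³` neither intersect nor are parallel. -/
theorem stmt15 (a b c : ℝ × ℝ) (hbc : b ≠ c) :
    ¬ ((∃ q, q ∈ lineES a b ∩ lineES a c) ∨ vab a b = vab a c) := by
  rintro (⟨q, hqb, hqc⟩ | h)
  · exact Set.disjoint_left.mp (disjoint_lineES a hbc) hqb hqc
  · exact hbc (vab_injective a h)
end

section
/- Let G = (V,E) be a graph on n vertices, let p, p' : V → ℝ² be maps with ‖p(u) − p(v)‖ = ‖p'(u) − p'(v)‖ for every edge {u,v} ∈ E, and suppose the lines ℓ_{p(v), p'(v)} ⊂ ℝ³, v ∈ V, are pairwise distinct. Then the intersection graph of the line sequence (ℓ_{p(v),p'(v)})_{v∈V} contains G, i.e., for every edge {u,v} of G, the lines ℓ_{p(u),p'(u)} and ℓ_{p(v),p'(v)} intersect or are parallel. -/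
/-!
Writing `s = (a + b) - (c + d)` and `w = (c - d) - (a - b)`, the lines `ℓ_{a,b}` and `ℓ_{c,d}`
meet at height `t` exactly when `s = t • w^⊥`, and they are parallel exactly when `w = 0`.
Since `s = (a - c) + (b - d)` and `w = (b - d) - (a - c)`, the inner product `⟪s, w⟫` equals
`‖b - d‖² - ‖a - c‖²`, which vanishes when `‖a - c‖ = ‖b - d‖`. In the plane a vector
orthogonal to a nonzero `w` is a multiple of `w^⊥`, so non-parallel lines then intersect.
-/

lemma sq_edist2 (p q : ℝ × ℝ) : edist2 p q ^ 2 = (p.1 - q.1) ^ 2 + (p.2 - q.2) ^ 2 :=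
  Real.sq_sqrt (by positivity)

lemma exists_eq_smul_perp_of_orthogonal {s w : ℝ × ℝ} (hw : w ≠ 0)
    (hsw : s.1 * w.1 + s.2 * w.2 = 0) : ∃ t : ℝ, s = t • perp w := by
  have hnorm : w.1 ^ 2 + w.2 ^ 2 ≠ 0 := by
    contrapose! hw
    ext <;> simp only [Prod.fst_zero, Prod.snd_zero] <;> nlinarith [sq_nonneg w.1, sq_nonneg w.2]
  refine ⟨(s.2 * w.1 - s.1 * w.2) / (w.1 ^ 2 + w.2 ^ 2), ?_⟩
  ext <;> simp only [perp, Prod.smul_fst, Prod.smul_snd, smul_eq_mul] <;> field_simp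
  · linear_combination w.1 * hsw
  · linear_combination w.2 * hsw

lemma mem_lineES_inter {a b c d : ℝ × ℝ} {t : ℝ}
    (h : a + b - (c + d) = t • perp (c - d - (a - b))) :
    (uab a b + t • vab a b, t) ∈ lineES a b ∩ lineES c d := by
  refine ⟨⟨t, rfl⟩, ⟨t, ?_⟩⟩
  have h1 := congrArg Prod.fst h
  have h2 := congrArg Prod.snd h
  simp only [perp, Prod.fst_add, Prod.fst_sub, Prod.snd_add, Prod.snd_sub, Prod.smul_fst,
    Prod.smul_snd, smul_eq_mul] at h1 h2
  ext <;> simp only [uab, vab, perp, Prod.fst_add, Prod.fst_sub, Prod.snd_add, Prod.snd_sub,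
    Prod.smul_fst, Prod.smul_snd, smul_eq_mul] <;> linarith

lemma lineES_meet_or_parallel_of_edist2_eq {a b c d : ℝ × ℝ} (h : edist2 a c = edist2 b d) :
    (∃ q, q ∈ lineES a b ∩ lineES c d) ∨ vab a b = vab c d := by
  by_cases hw : c - d - (a - b) = 0
  · right
    rw [vab, vab, sub_eq_zero.mp hw]
  · left
    have hsq : (a.1 - c.1) ^ 2 + (a.2 - c.2) ^ 2 = (b.1 - d.1) ^ 2 + (b.2 - d.2) ^ 2 := by
      rw [← sq_edist2, ← sq_edist2, h]
    obtain ⟨t, ht⟩ := exists_eq_smul_perp_of_orthogonal hw (s := a + b - (c + d)) (by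
      simp only [Prod.fst_add, Prod.fst_sub, Prod.snd_add, Prod.snd_sub]
      linear_combination -hsq)
    exact ⟨_, mem_lineES_inter ht⟩

theorem stmt19_general {V : Type*} (G : SimpleGraph V) (p p' : V → ℝ × ℝ)
    (hdist : ∀ u v : V, G.Adj u v →
      edist2 (p u) (p v) = edist2 (p' u) (p' v)) :
    ∀ u v : V, G.Adj u v →
      ((∃ q, q ∈ lineES (p u) (p' u) ∩ lineES (p v) (p' v)) ∨
        vab (p u) (p' u) = vab (p v) (p' v)) :=
  fun u v huv => lineES_meet_or_parallel_of_edist2_eq (hdist u v huv)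

/-- Let `G` be a graph on a vertex set `V` and `p, p' : V → ℝ²` maps with
`‖p(u) − p(v)‖ = ‖p'(u) − p'(v)‖` for every edge `uv` of `G`, such that the
lines `ℓ_{p(v),p'(v)}`, `v ∈ V`, are pairwise distinct.  Then for every edge
`uv` of `G`, the lines `ℓ_{p(u),p'(u)}` and `ℓ_{p(v),p'(v)}` intersect or
are parallel; i.e. the intersection graph of the line sequence contains `G`. -/
theorem stmt19 {V : Type*} (G : SimpleGraph V) (p p' : V → ℝ × ℝ)
    (hdist : ∀ u v : V, G.Adj u v →
      edist2 (p u) (p v) = edist2 (p' u) (p' v))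
    (hdistinct : ∀ u v : V, u ≠ v →
      lineES (p u) (p' u) ≠ lineES (p v) (p' v)) :
    ∀ u v : V, G.Adj u v →
      ((∃ q, q ∈ lineES (p u) (p' u) ∩ lineES (p v) (p' v)) ∨
        vab (p u) (p' u) = vab (p v) (p' v)) :=
  stmt19_general G p p' hdist
end
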